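/- arXiv:0809.3738 — 3 statements merged into one kernel-verified Lean document; each statement's English description precedes it below -/
import Mathlib

section
/- For every i = 1,…,r one has δ_i·α_i ∈ X^*(Ť_N); that is, each rescaled simple coroot δ_i·α_i (a simple root of the dual group Ǧ_N in Theorem 1) lies in the lattice X^*(Ť_N). -/
open Module Finset

/-- A finite reduced irreducible root system, encoded by its (finite) set of coroots
`coroots ⊆ V` together with the bijection `rt : α ↦ α̌` from coroots to roots
(elements of the dual space `V^*`), satisfying `⟨α, α̌⟩ = rt α α = 2`.
The canonical pairing `⟨·,·⟩ : V × V^* → ℚ` is function application. -/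
structure IrredRootSystem (V : Type*) [AddCommGroup V] [Module ℚ V] where
  /-- the set `R_*` of coroots -/
  coroots : Finset V
  ne_zero : (0 : V) ∉ coroots
  nonempty : coroots.Nonempty
  /-- the coroots span `V` -/
  span_eq_top : Submodule.span ℚ (coroots : Set V) = ⊤
  /-- the bijection `α ↦ α̌` from coroots to roots; `R^* = rt '' coroots` -/
  rt : V → Module.Dual ℚ V
  /-- the roots span `V^*` -/
  span_rt_eq_top : Submodule.span ℚ (rt '' (coroots : Set V)) = ⊤
  rt_self : ∀ α ∈ coroots, rt α α = 2
  rt_injOn : Set.InjOn rt (coroots : Set V)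
  neg_mem : ∀ α ∈ coroots, -α ∈ coroots
  rt_neg : ∀ α ∈ coroots, rt (-α) = - rt α
  /-- crystallographic condition: `⟨α, β̌⟩ ∈ ℤ` -/
  crystallographic : ∀ α ∈ coroots, ∀ β ∈ coroots, ∃ n : ℤ, rt β α = (n : ℚ)
  /-- reducedness -/
  reduced : ∀ α ∈ coroots, ∀ c : ℚ, c • α ∈ coroots → c = 1 ∨ c = -1
  /-- the reflection `s_α : x ↦ x - ⟨x, α̌⟩ α` preserves the set of coroots -/
  reflect_mem : ∀ α ∈ coroots, ∀ β ∈ coroots, β - rt α β • α ∈ coroots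
  /-- irreducibility: no nontrivial orthogonal decomposition of the coroots -/
  irreducible : ∀ s : Finset V, s ⊆ coroots →
    (∀ α ∈ s, ∀ β ∈ coroots, β ∉ s → rt β α = 0) → s = ∅ ∨ s = coroots

namespace IrredRootSystem

variable {V : Type*} [AddCommGroup V] [Module ℚ V]

/-- The Weyl group `W ⊆ GL(V)`: the subgroup generated by the reflections
`s_α : x ↦ x - ⟨x, α̌⟩ α` in the coroots `α`. -/
def weylGroup (P : IrredRootSystem V) : Subgroup (V ≃ₗ[ℚ] V) :=
  Subgroup.closure { w : V ≃ₗ[ℚ] V | ∃ α ∈ P.coroots, ∀ x : V, w x = x - P.rt α x • α }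

/-- Invariance of a bilinear form under the Weyl group. -/
def WInvar (P : IrredRootSystem V) (B : V →ₗ[ℚ] V →ₗ[ℚ] ℚ) : Prop :=
  ∀ w ∈ P.weylGroup, ∀ x y : V, B (w x) (w y) = B x y

/-- `α` is a short coroot: a coroot of minimal length with respect to a(ny)
`W`-invariant inner product (symmetric positive-definite bilinear form) on `V`. -/
def IsShort (P : IrredRootSystem V) (α : V) : Prop :=
  α ∈ P.coroots ∧ ∀ B : V →ₗ[ℚ] V →ₗ[ℚ] ℚ, (∀ x y : V, B x y = B y x) →
    P.WInvar B → (∀ x : V, x ≠ 0 → 0 < B x x) → ∀ β ∈ P.coroots, B α α ≤ B β β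

/-- The conditions characterizing the bilinear form `(·,·)`: symmetric,
`W`-invariant, and `(α, α) = 2` for every short coroot `α`. -/
def IsNormForm (P : IrredRootSystem V) (B : V →ₗ[ℚ] V →ₗ[ℚ] ℚ) : Prop :=
  (∀ x y : V, B x y = B y x) ∧ P.WInvar B ∧ ∀ α : V, P.IsShort α → B α α = 2

end IrredRootSystem

/-- A base of the root system: simple coroots `sc 1, …, sc r` (with corresponding
simple roots `rt (sc i)`), the subset `pos ⊆ coroots` consisting of the coroots of
the positive roots `R^{*+}` (so `R^{*+} = rt '' pos`), and the coroot `hc = θ̌` of the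
highest root `θ = rt hc`. -/
structure BaseData {V : Type*} [AddCommGroup V] [Module ℚ V] (P : IrredRootSystem V) where
  r : ℕ
  sc : Fin r → V
  sc_mem : ∀ i, sc i ∈ P.coroots
  sc_inj : Function.Injective sc
  pos : Finset V
  pos_sub : pos ⊆ P.coroots
  sc_pos : ∀ i, sc i ∈ pos
  /-- every root is either positive or negative, not both -/
  pos_or_neg : ∀ α ∈ P.coroots, (α ∈ pos ∧ -α ∉ pos) ∨ (α ∉ pos ∧ -α ∈ pos)
  /-- every positive root is a nonnegative integral combination of the simple roots -/
  pos_decomp : ∀ α ∈ pos, ∃ c : Fin r → ℕ, P.rt α = ∑ i, (c i : ℚ) • P.rt (sc i)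
  hc : V
  hc_mem : hc ∈ pos
  /-- `rt hc` is the highest root: it dominates every root -/
  hc_highest : ∀ α ∈ P.coroots, ∃ c : Fin r → ℕ,
    P.rt hc - P.rt α = ∑ i, (c i : ℚ) • P.rt (sc i)

namespace BaseData

variable {V : Type*} [AddCommGroup V] [Module ℚ V] {P : IrredRootSystem V}

/-- `ρ ∈ V^*`, the half-sum of the positive roots. -/
noncomputable def rho (Ba : BaseData P) : Module.Dual ℚ V :=
  (1/2 : ℚ) • ∑ α ∈ Ba.pos, P.rt α

/-- The dual Coxeter number `ȟ = 1 + ⟨θ̌, ρ⟩`. -/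
noncomputable def dualCox (Ba : BaseData P) : ℚ := 1 + Ba.rho Ba.hc

end BaseData

/-- `X^*(T) = {x ∈ V^* : ⟨λ, x⟩ ∈ ℤ for all λ ∈ L}`, the dual lattice of `L`. -/
def dualLat {V : Type*} [AddCommGroup V] [Module ℚ V] (L : AddSubgroup V) :
    Set (Module.Dual ℚ V) :=
  { x | ∀ lam ∈ L, ∃ n : ℤ, x lam = (n : ℚ) }

/-- `X^*(Ť_N) = {ν ∈ X_*(T) : d·ι(ν) ∈ N·X^*(T)}`, where `ι = B.flip`, i.e.
`(ι y) x = B x y`. -/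
def TwN {V : Type*} [AddCommGroup V] [Module ℚ V] (B : V →ₗ[ℚ] V →ₗ[ℚ] ℚ)
    (L : AddSubgroup V) (d N : ℕ) : Set V :=
  { ν | ν ∈ L ∧ ∃ y ∈ dualLat L, (d : ℚ) • (LinearMap.flip B) ν = (N : ℚ) • y }

variable {V : Type*} [AddCommGroup V] [Module ℚ V] [FiniteDimensional ℚ V]

/-- Key identity: `2·B(x,α) = B(α,α)·⟨x,α̌⟩` for every coroot `α`. -/
lemma key_ident (P : IrredRootSystem V) (B : V →ₗ[ℚ] V →ₗ[ℚ] ℚ)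
    (hinv : P.WInvar B) {α : V} (hα : α ∈ P.coroots) (x : V) :
    2 * B x α = B α α * P.rt α x := by
  have h2 : P.rt α α = 2 := P.rt_self α hα
  set f : V →ₗ[ℚ] V := LinearMap.id - (P.rt α).smulRight α with hf
  have hfx : ∀ y : V, f y = y - P.rt α y • α := fun y => rfl
  have hinvol : ∀ y : V, f (f y) = y := by
    intro y
    simp only [hfx, map_sub, map_smul, h2, smul_eq_mul, smul_sub, sub_smul, mul_smul]
    module
  have hcomp : f.comp f = LinearMap.id := by
    apply LinearMap.ext; intro y; simpa using hinvol y
  set w : V ≃ₗ[ℚ] V := LinearEquiv.ofLinear f f hcomp hcomp with hw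
  have hwmem : w ∈ P.weylGroup := by
    apply Subgroup.subset_closure
    exact ⟨α, hα, fun y => rfl⟩
  have hwa : w α = -α := by
    show f α = -α
    rw [hfx, h2]
    module
  have := hinv w hwmem x α
  rw [hwa] at this
  have hwx : w x = x - P.rt α x • α := rfl
  rw [hwx] at this
  simp only [map_sub, map_smul, map_neg, smul_eq_mul, LinearMap.sub_apply,
    LinearMap.smul_apply, LinearMap.neg_apply] at this
  linarith

/-- for every `i = 1,…,r`, `δ_i·α_i ∈ X^*(Ť_N)`; here `δ_i` is the
denominator of `d·(α_i,α_i)/(2N)`. -/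
theorem stmt_8 (P : IrredRootSystem V) (Ba : BaseData P)
    (B : V →ₗ[ℚ] V →ₗ[ℚ] ℚ) (hB : P.IsNormForm B) (L : AddSubgroup V)
    (hL1 : ∀ α ∈ P.coroots, α ∈ L)
    (hL2 : ∀ lam ∈ L, ∀ α ∈ P.coroots, ∃ n : ℤ, P.rt α lam = (n : ℚ))
    (d : ℕ)
    (hd : IsLeast {n : ℕ | 0 < n ∧
      ∀ lam ∈ L, (n : ℚ) • (LinearMap.flip B) lam ∈ dualLat L} d)
    (N : ℕ) (hN : 0 < N)
    (δ : Fin Ba.r → ℕ)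
    (hδ : ∀ i, IsLeast {m : ℕ | 0 < m ∧
      ∃ k : ℤ, (m : ℚ) * ((d : ℚ) * B (Ba.sc i) (Ba.sc i) / (2 * (N : ℚ))) = (k : ℚ)}
      (δ i))
    (i : Fin Ba.r) :
    ((δ i : ℚ) • Ba.sc i) ∈ TwN B L d N := by
  obtain ⟨hsym, hinv, -⟩ := hB
  set α := Ba.sc i with hαdef
  have hα : α ∈ P.coroots := Ba.sc_mem i
  obtain ⟨⟨hδpos, k, hk⟩, -⟩ := hδ i
  constructor
  · have : ((δ i : ℚ) • α) = (δ i) • α := by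
      rw [Nat.cast_smul_eq_nsmul]
    rw [this]
    exact AddSubgroup.nsmul_mem L (hL1 α hα) _
  · refine ⟨(k : ℚ) • P.rt α, ?_, ?_⟩
    · intro lam hlam
      obtain ⟨n, hn⟩ := hL2 lam hlam α hα
      exact ⟨k * n, by simp [hn, mul_comm]⟩
    · apply LinearMap.ext
      intro x
      have hkey := key_ident P B hinv hα x
      have hNne : (N : ℚ) ≠ 0 := Nat.cast_ne_zero.mpr hN.ne'
      have hk' : (δ i : ℚ) * ((d : ℚ) * B α α) = 2 * (N : ℚ) * k := by
        field_simp at hk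
        linarith
      simp only [LinearMap.smul_apply, LinearMap.flip_apply, LinearMap.map_smul,
        smul_eq_mul]
      rw [hsym x α] at hkey ⊢
      linear_combination ((d : ℚ) * (δ i : ℚ) / 2) * hkey + (P.rt α x / 2) * hk'
end

section
/- For every ν ∈ X^*(Ť_N) and every i = 1,…,r, the integer ⟨ν, α̌_i⟩ is divisible by δ_i; equivalently, the rescaled simple root α̌_i/δ_i (a simple coroot of the dual group Ǧ_N in Theorem 1) defines a ℤ-valued linear functional on X^*(Ť_N). -/
open Module Finset

/-! Applying the reflection `s_α` to the `W`-invariant form gives `2 (α, ν) = ⟨ν, α̌⟩ (α, α)`, so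
`⟨ν, α̌_i⟩ · d (α_i, α_i) / (2N) = d (α_i, ν) / N`, which is an integer for `ν ∈ X^*(Ť_N)`. As `δ_i`
is the denominator of `d (α_i, α_i) / (2N)`, it divides `⟨ν, α̌_i⟩`. -/

lemma Rat.den_dvd_of_intCast_mul_eq_intCast {q : ℚ} {n k : ℤ} (h : n * q = k) : (q.den : ℤ) ∣ n := by
  have hcop : IsCoprime (q.den : ℤ) q.num := by
    rw [Int.isCoprime_iff_gcd_eq_one, Int.gcd_comm]
    exact q.reduced
  refine hcop.dvd_of_dvd_mul_right ⟨k, ?_⟩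
  have : (n * q.num : ℚ) = q.den * k := by
    rw [← Rat.den_mul_eq_num, ← h]
    ring
  exact_mod_cast this

lemma Rat.eq_den_of_isLeast {q : ℚ} {δ : ℕ}
    (hδ : IsLeast {m : ℕ | 0 < m ∧ ∃ k : ℤ, (m : ℚ) * q = k} δ) : δ = q.den := by
  refine hδ.unique ⟨⟨q.den_pos, q.num, by exact_mod_cast q.den_mul_eq_num⟩, ?_⟩
  rintro m ⟨hm, k, hk⟩
  have hdvd : (q.den : ℤ) ∣ m := Rat.den_dvd_of_intCast_mul_eq_intCast (k := k) (by exact_mod_cast hk)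
  exact Nat.le_of_dvd hm (Int.natCast_dvd_natCast.mp hdvd)

namespace IrredRootSystem

variable {V : Type*} [AddCommGroup V] [Module ℚ V] {P : IrredRootSystem V}

lemma reflection_mem_weylGroup {α : V} (hα : α ∈ P.coroots) :
    Module.reflection (P.rt_self α hα) ∈ P.weylGroup :=
  Subgroup.subset_closure ⟨α, hα, fun _ => Module.reflection_apply _ _⟩

lemma WInvar.two_mul_apply_eq {B : V →ₗ[ℚ] V →ₗ[ℚ] ℚ} (hB : P.WInvar B)
    {α : V} (hα : α ∈ P.coroots) (x : V) : 2 * B α x = P.rt α x * B α α := by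
  have h := hB _ (reflection_mem_weylGroup hα) α x
  rw [Module.reflection_apply_self, Module.reflection_apply] at h
  simp only [map_sub, map_smul, map_neg, LinearMap.neg_apply, smul_eq_mul] at h
  linarith

lemma WInvar.rt_mul_eq_of_smul_flip_eq {B : V →ₗ[ℚ] V →ₗ[ℚ] ℚ} (hB : P.WInvar B)
    {α : V} (hα : α ∈ P.coroots) {ν : V} {y : Dual ℚ V} {d N : ℚ} (hN : N ≠ 0)
    (h : d • B.flip ν = N • y) : P.rt α ν * (d * B α α / (2 * N)) = y α := by
  have hνα : d * B α ν = N * y α := by simpa using congr($h α)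
  have := hB.two_mul_apply_eq hα ν
  field_simp
  linear_combination 2 * hνα - d * this

end IrredRootSystem

variable {V : Type*} [AddCommGroup V] [Module ℚ V] [FiniteDimensional ℚ V]

theorem stmt_9_general (P : IrredRootSystem V) (Ba : BaseData P)
    (B : V →ₗ[ℚ] V →ₗ[ℚ] ℚ) (hB : P.IsNormForm B) (L : AddSubgroup V)
    (hL1 : ∀ α ∈ P.coroots, α ∈ L)
    (hL2 : ∀ lam ∈ L, ∀ α ∈ P.coroots, ∃ n : ℤ, P.rt α lam = (n : ℚ))
    (d : ℕ)
    (N : ℕ) (hN : 0 < N)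
    (δ : Fin Ba.r → ℕ)
    (hδ : ∀ i, IsLeast {m : ℕ | 0 < m ∧
      ∃ k : ℤ, (m : ℚ) * ((d : ℚ) * B (Ba.sc i) (Ba.sc i) / (2 * (N : ℚ))) = (k : ℚ)}
      (δ i))
    (ν : V) (hν : ν ∈ TwN B L d N) (i : Fin Ba.r) :
    ∃ k : ℤ, P.rt (Ba.sc i) ν = (δ i : ℚ) * (k : ℚ) := by
  obtain ⟨hνL, y, hy, hdy⟩ := hν
  have hα := Ba.sc_mem i
  obtain ⟨n, hn⟩ := hL2 ν hνL _ hα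
  obtain ⟨m, hm⟩ := hy _ (hL1 _ hα)
  have hq := hB.2.1.rt_mul_eq_of_smul_flip_eq hα (by positivity) hdy
  rw [hn, hm] at hq
  obtain ⟨k, hk⟩ := Rat.den_dvd_of_intCast_mul_eq_intCast hq
  exact ⟨k, by rw [hn, Rat.eq_den_of_isLeast (hδ i)]; exact_mod_cast hk⟩

/-- for every `ν ∈ X^*(Ť_N)` and every `i`, the integer `⟨ν, α̌_i⟩` is
divisible by `δ_i`. -/
theorem stmt_9 (P : IrredRootSystem V) (Ba : BaseData P)
    (B : V →ₗ[ℚ] V →ₗ[ℚ] ℚ) (hB : P.IsNormForm B) (L : AddSubgroup V)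
    (hL1 : ∀ α ∈ P.coroots, α ∈ L)
    (hL2 : ∀ lam ∈ L, ∀ α ∈ P.coroots, ∃ n : ℤ, P.rt α lam = (n : ℚ))
    (d : ℕ)
    (hd : IsLeast {n : ℕ | 0 < n ∧
      ∀ lam ∈ L, (n : ℚ) • (LinearMap.flip B) lam ∈ dualLat L} d)
    (N : ℕ) (hN : 0 < N)
    (δ : Fin Ba.r → ℕ)
    (hδ : ∀ i, IsLeast {m : ℕ | 0 < m ∧
      ∃ k : ℤ, (m : ℚ) * ((d : ℚ) * B (Ba.sc i) (Ba.sc i) / (2 * (N : ℚ))) = (k : ℚ)}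
      (δ i))
    (ν : V) (hν : ν ∈ TwN B L d N) (i : Fin Ba.r) :
    ∃ k : ℤ, P.rt (Ba.sc i) ν = (δ i : ℚ) * (k : ℚ) :=
  stmt_9_general P Ba B hB L hL1 hL2 d N hN δ hδ ν hν i
end

section
/- For all i, j ∈ {1,…,r}, the rational number (δ_i/δ_j)·⟨α_i, α̌_j⟩ is an integer; that is, the pairing of the simple root δ_i·α_i of the dual group Ǧ_N with the simple coroot α̌_j/δ_j of Ǧ_N is integral, so these data satisfy the integrality axiom of a root datum. -/
open Module Finset

variable {V : Type*} [AddCommGroup V] [Module ℚ V] [FiniteDimensional ℚ V]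

/-- If `δ` is the least positive natural with `δ • q ∈ ℤ`, then `δ` divides any
integer `m` with `m • q ∈ ℤ`. -/
lemma denom_dvd (q : ℚ) (δ : ℕ)
    (h : IsLeast {m : ℕ | 0 < m ∧ ∃ k : ℤ, (m : ℚ) * q = (k : ℚ)} δ)
    (m : ℤ) (hm : ∃ k : ℤ, (m : ℚ) * q = (k : ℚ)) : (δ : ℤ) ∣ m := by
  obtain ⟨⟨hδpos, kδ, hkδ⟩, hmin⟩ := h
  have hδ0 : (0 : ℤ) < (δ : ℤ) := by exact_mod_cast hδpos
  set t : ℤ := m % (δ : ℤ) with ht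
  have ht0 : 0 ≤ t := Int.emod_nonneg m (by omega)
  have htlt : t < (δ : ℤ) := Int.emod_lt_of_pos m hδ0
  by_contra hdvd
  have htne : t ≠ 0 := fun h0 => hdvd (Int.dvd_of_emod_eq_zero h0)
  obtain ⟨k, hk⟩ := hm
  have htq : ∃ k' : ℤ, ((t.toNat : ℕ) : ℚ) * q = (k' : ℚ) := by
    refine ⟨k - (m / (δ : ℤ)) * kδ, ?_⟩
    have hmtZ : t = m - (δ : ℤ) * (m / (δ : ℤ)) := Int.emod_def m _
    have hmt : (t : ℚ) = (m : ℚ) - ((m / (δ : ℤ) : ℤ) : ℚ) * ((δ : ℕ) : ℚ) := by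
      rw [hmtZ]; push_cast; ring
    have htoNat : ((t.toNat : ℕ) : ℚ) = (t : ℚ) := by
      exact_mod_cast Int.toNat_of_nonneg ht0
    rw [htoNat, hmt]
    push_cast
    linear_combination hk - ((m / (δ : ℤ) : ℤ) : ℚ) * hkδ
  have hmem : t.toNat ∈ {m : ℕ | 0 < m ∧ ∃ k : ℤ, (m : ℚ) * q = (k : ℚ)} := by
    refine ⟨?_, htq⟩
    omega
  have := hmin hmem
  omega

/-- Key identity from `W`-invariance: `⟨x, α̌⟩ (α, α) = 2 (x, α)`. -/
lemma norm_form_key (P : IrredRootSystem V) (B : V →ₗ[ℚ] V →ₗ[ℚ] ℚ)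
    (hW : P.WInvar B) (α : V) (hα : α ∈ P.coroots) (x : V) :
    P.rt α x * B α α = 2 * B x α := by
  have h2 : P.rt α α = 2 := P.rt_self α hα
  set s : V ≃ₗ[ℚ] V := Module.reflection h2 with hs
  have hsmem : s ∈ P.weylGroup := by
    apply Subgroup.subset_closure
    exact ⟨α, hα, fun y => Module.reflection_apply y h2⟩
  have key := hW s hsmem x α
  have hsx : s x = x - P.rt α x • α := Module.reflection_apply x h2
  have hsα : s α = -α := Module.reflection_apply_self h2
  rw [hsx, hsα] at key
  simp only [map_sub, map_smul, map_neg, LinearMap.sub_apply, LinearMap.smul_apply,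
    LinearMap.neg_apply, smul_eq_mul] at key
  linarith

/-- for all `i, j`, the rational number `(δ_i/δ_j)·⟨α_i, α̌_j⟩` is an
integer (the integrality axiom of the root datum of the dual group `Ǧ_N`). -/
theorem stmt_10 (P : IrredRootSystem V) (Ba : BaseData P)
    (B : V →ₗ[ℚ] V →ₗ[ℚ] ℚ) (hB : P.IsNormForm B) (L : AddSubgroup V)
    (hL1 : ∀ α ∈ P.coroots, α ∈ L)
    (hL2 : ∀ lam ∈ L, ∀ α ∈ P.coroots, ∃ n : ℤ, P.rt α lam = (n : ℚ))
    (d : ℕ)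
    (hd : IsLeast {n : ℕ | 0 < n ∧
      ∀ lam ∈ L, (n : ℚ) • (LinearMap.flip B) lam ∈ dualLat L} d)
    (N : ℕ) (hN : 0 < N)
    (δ : Fin Ba.r → ℕ)
    (hδ : ∀ i, IsLeast {m : ℕ | 0 < m ∧
      ∃ k : ℤ, (m : ℚ) * ((d : ℚ) * B (Ba.sc i) (Ba.sc i) / (2 * (N : ℚ))) = (k : ℚ)}
      (δ i))
    (i j : Fin Ba.r) :
    ∃ k : ℤ, ((δ i : ℚ) / (δ j : ℚ)) * (P.rt (Ba.sc j) (Ba.sc i)) = (k : ℚ) := by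
  obtain ⟨hsym, hW, -⟩ := hB
  have hi : Ba.sc i ∈ P.coroots := Ba.sc_mem i
  have hj : Ba.sc j ∈ P.coroots := Ba.sc_mem j
  -- the Cartan integers
  obtain ⟨n, hn⟩ := P.crystallographic (Ba.sc i) hi (Ba.sc j) hj
  obtain ⟨n', hn'⟩ := P.crystallographic (Ba.sc j) hj (Ba.sc i) hi
  -- key identities
  have key1 : P.rt (Ba.sc j) (Ba.sc i) * B (Ba.sc j) (Ba.sc j)
      = 2 * B (Ba.sc i) (Ba.sc j) := norm_form_key P B hW (Ba.sc j) hj (Ba.sc i)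
  have key2 : P.rt (Ba.sc i) (Ba.sc j) * B (Ba.sc i) (Ba.sc i)
      = 2 * B (Ba.sc j) (Ba.sc i) := norm_form_key P B hW (Ba.sc i) hi (Ba.sc j)
  have hsymij : B (Ba.sc i) (Ba.sc j) = B (Ba.sc j) (Ba.sc i) := hsym _ _
  have hswap : (n : ℚ) * B (Ba.sc j) (Ba.sc j) = (n' : ℚ) * B (Ba.sc i) (Ba.sc i) := by
    rw [← hn, ← hn', key1, key2, hsymij]
  -- δ i * q i ∈ ℤ
  obtain ⟨-, ki, hki⟩ := (hδ i).1
  -- the integer (δ i) * n has (δ i * n) * q j ∈ ℤ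
  have hdvd : ((δ j : ℤ)) ∣ ((δ i : ℤ) * n) := by
    apply denom_dvd _ _ (hδ j)
    refine ⟨n' * ki, ?_⟩
    have : (((δ i : ℤ) * n : ℤ) : ℚ) * ((d : ℚ) * B (Ba.sc j) (Ba.sc j) / (2 * (N : ℚ)))
        = (n' : ℚ) * (((δ i : ℕ) : ℚ) * ((d : ℚ) * B (Ba.sc i) (Ba.sc i) / (2 * (N : ℚ)))) := by
      push_cast
      linear_combination (((δ i : ℕ) : ℚ) * (d : ℚ) / (2 * (N : ℚ))) * hswap
    rw [this, hki]
    push_cast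
    ring
  obtain ⟨k, hk⟩ := hdvd
  refine ⟨k, ?_⟩
  have hδj : ((δ j : ℚ)) ≠ 0 := by
    have := (hδ j).1.1
    positivity
  have hkQ : ((δ i : ℚ)) * (n : ℚ) = ((δ j : ℚ)) * (k : ℚ) := by exact_mod_cast hk
  rw [hn]
  field_simp
  linarith [hkQ]
end
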